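/- For odd m with 1 ≤ m ≤ 2n+1, the number of maximal pairwise anticommuting subsets of (𝔽₂)^{2n} of cardinality m equals (1/m!) ∏_{k=0}^{m−2} s(k), where s(k) = 4^n/2^k if k is odd and 4^n/2^k − 1 if k is even; for even m or m > 2n+1 the number is 0. -/

import Mathlib

/-- The phase space `(𝔽₂)^{2n}`, modeled as pairs of vectors in `𝔽₂ⁿ`. -/
abbrev V (n : ℕ) := (Fin n → ZMod 2) × (Fin n → ZMod 2)

/-- The standard symplectic bilinear form `ω((a,b),(c,d)) = a·d + b·c`. -/
def sympl {n : ℕ} (P Q : V n) : ZMod 2 :=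
  ∑ i, (P.1 i * Q.2 i + P.2 i * Q.1 i)

/-- A finite set is (pairwise) anticommuting if `ω(P,Q) = 1` for all distinct `P, Q`. -/
def AC {n : ℕ} (G : Finset (V n)) : Prop :=
  ∀ P ∈ G, ∀ Q ∈ G, P ≠ Q → sympl P Q = 1

/-- A maximal pairwise anticommuting set: no strictly larger set is anticommuting. -/
def MaxAC {n : ℕ} (G : Finset (V n)) : Prop :=
  AC G ∧ ∀ H : Finset (V n), G ⊆ H → AC H → H = G

/-- `s(k) = 4^n/2^k` if `k` is odd, and `4^n/2^k - 1` if `k` is even. -/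
noncomputable def s (n k : ℕ) : ℚ :=
  if Odd k then (4 : ℚ) ^ n / 2 ^ k else (4 : ℚ) ^ n / 2 ^ k - 1

/-!
A finite anticommuting set `G` is maximal exactly when it is nonempty with zero sum. If the sum
is nonzero, `G` is linearly independent (in a linear relation among pairwise anticommuting
vectors, pairing with each vector shows that all coefficients are equal), so by nondegeneracy
of `ω` some vector anticommutes with all of `G`. Conversely, pairing an element with the zero
sum shows that `|G|` is odd, and pairing a new vector with it rules out any extension.

Listing its elements in order, a maximal set of size `j + 1` gives `(j + 1)!` anticommuting
tuples with zero sum. Dropping the last entry, these are exactly the linearly independent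
anticommuting `j`-tuples, because the last entry is the sum of the others. Such tuples are
built one vector at a time. The vectors anticommuting with an independent `k`-tuple form an
affine subspace of dimension `2n - k`. The only one of them in the span of the tuple is the sum
of its entries, and only when `k` is even. This gives `s(k)` choices for the next vector.
-/

open Finset Function Module

lemma Nat.card_and_add_card_and_not {α : Type*} [Finite α] (p q : α → Prop) :
    Nat.card {x // p x ∧ q x} + Nat.card {x // p x ∧ ¬q x} = Nat.card {x // p x} := by
  classical
  have := Fintype.ofFinite α
  simp only [Nat.card_eq_fintype_card, Fintype.card_subtype, ← filter_filter]
  exact card_filter_add_card_filter_not _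

lemma Nat.card_eq_mul_of_card_fiber {α β : Type*} [Finite α] [Finite β] (f : α → β)
    {k : ℕ} (hf : ∀ b, Nat.card {a // f a = b} = k) : Nat.card α = Nat.card β * k := by
  have := Fintype.ofFinite β
  rw [← Nat.card_congr (Equiv.sigmaFiberEquiv f), Nat.card_sigma, sum_congr rfl fun b _ => hf b,
    sum_const, Finset.card_univ, smul_eq_mul, Nat.card_eq_fintype_card]

section Enumeration

variable {α : Type*} [DecidableEq α] (p : Finset α → Prop) {m : ℕ}

def imageOfInjective (t : {t : Fin m → α // Injective t ∧ p (univ.image t)}) :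
    {G : Finset α // p G ∧ #G = m} :=
  ⟨univ.image t.1, t.2.2, by rw [card_image_of_injective _ t.2.1, card_fin]⟩

lemma image_coe_equiv {G : Finset α} (e : Fin m ≃ G) : univ.image (fun i => (e i : α)) = G := by
  ext x
  simp only [mem_image, mem_univ, true_and]
  exact ⟨by rintro ⟨i, rfl⟩; exact (e i).2, fun hx => ⟨e.symm ⟨x, hx⟩, by simp⟩⟩

noncomputable def imageOfInjectiveFiberEquiv (G : {G : Finset α // p G ∧ #G = m}) :
    {t // imageOfInjective p t = G} ≃ (Fin m ≃ G.1) where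
  toFun t :=
    have himg : univ.image t.1.1 = G.1 := congrArg Subtype.val t.2
    Equiv.ofBijective
      (fun i => ⟨t.1.1 i, by rw [← himg]; exact mem_image_of_mem _ (mem_univ i)⟩)
      ⟨fun i j hij => t.1.2.1 (congrArg Subtype.val hij), fun x => by
        have hx : x.1 ∈ univ.image t.1.1 := by rw [himg]; exact x.2
        obtain ⟨i, -, hi⟩ := mem_image.1 hx
        exact ⟨i, Subtype.ext hi⟩⟩
  invFun e := ⟨⟨fun i => e i, Subtype.val_injective.comp e.injective, by
      rw [image_coe_equiv]; exact G.2.1⟩, Subtype.ext (image_coe_equiv e)⟩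
  left_inv _ := rfl
  right_inv _ := Equiv.ext fun _ => rfl

lemma card_injective_tuples [Finite α] :
    Nat.card {t : Fin m → α // Injective t ∧ p (univ.image t)} =
      Nat.card {G : Finset α // p G ∧ #G = m} * m.factorial := by
  refine Nat.card_eq_mul_of_card_fiber (imageOfInjective p) fun G => ?_
  rw [Nat.card_congr (imageOfInjectiveFiberEquiv p G), Nat.card_eq_fintype_card,
    Fintype.card_equiv (Fintype.equivFinOfCardEq (by simp [G.2.2])).symm, Fintype.card_fin]

end Enumeration

section

variable {n : ℕ}

lemma sympl_comm (P Q : V n) : sympl P Q = sympl Q P := by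
  simp only [sympl, add_comm, mul_comm]

lemma sympl_self (P : V n) : sympl P P = 0 := by
  simp [sympl, mul_comm (P.2 _), ZModModule.add_self]

def symplForm (n : ℕ) : LinearMap.BilinForm (ZMod 2) (V n) :=
  LinearMap.mk₂ (ZMod 2) sympl
    (fun _ _ _ => by simp only [sympl, ← sum_add_distrib]; congr! 1; simp; ring)
    (fun _ _ _ => by simp only [sympl, smul_eq_mul, mul_sum]; congr! 1; simp; ring)
    (fun _ _ _ => by simp only [sympl, ← sum_add_distrib]; congr! 1; simp; ring)
    (fun _ _ _ => by simp only [sympl, smul_eq_mul, mul_sum]; congr! 1; simp; ring)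

lemma symplForm_apply (P Q : V n) : symplForm n P Q = sympl P Q := rfl

lemma sympl_sum_right {ι : Type*} (P : V n) (s : Finset ι) (f : ι → V n) :
    sympl P (∑ i ∈ s, f i) = ∑ i ∈ s, sympl P (f i) :=
  map_sum (symplForm n P) f s

lemma sympl_sum_left {ι : Type*} (s : Finset ι) (f : ι → V n) (Q : V n) :
    sympl (∑ i ∈ s, f i) Q = ∑ i ∈ s, sympl (f i) Q := by
  rw [sympl_comm, sympl_sum_right]; simp only [sympl_comm Q]

lemma sympl_smul_right (P Q : V n) (c : ZMod 2) : sympl P (c • Q) = c * sympl P Q :=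
  map_smul (symplForm n P) c Q

lemma sympl_smul_left (P Q : V n) (c : ZMod 2) : sympl (c • P) Q = c * sympl P Q := by
  rw [sympl_comm, sympl_smul_right, sympl_comm]

lemma sympl_zero_right (P : V n) : sympl P 0 = 0 := map_zero (symplForm n P)

lemma eq_zero_of_forall_sympl_eq_zero {P : V n} (h : ∀ Q, sympl P Q = 0) : P = 0 := by
  ext j
  · simpa [sympl, Pi.single_apply] using h (0, Pi.single j 1)
  · simpa [sympl, Pi.single_apply] using h (Pi.single j 1, 0)

lemma finrank_V : finrank (ZMod 2) (V n) = 2 * n := by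
  simp [two_mul]

lemma surjective_pi_symplForm {ι : Type*} [Fintype ι] {u : ι → V n}
    (hu : LinearIndependent (ZMod 2) u) :
    Surjective (LinearMap.pi fun i => symplForm n (u i)) := by
  classical
  rw [← LinearMap.dualMap_injective_iff, injective_iff_map_eq_zero]
  intro φ hφ
  set c : ι → ZMod 2 := fun i => φ fun j => if i = j then 1 else 0
  have hφ_apply (x : ι → ZMod 2) : φ x = ∑ i, x i * c i := φ.pi_apply_eq_sum_univ x
  have hcomb : ∑ i, c i • u i = 0 := by
    refine eq_zero_of_forall_sympl_eq_zero fun Q => ?_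
    have hQ : φ (fun i => sympl (u i) Q) = 0 := LinearMap.congr_fun hφ Q
    rw [hφ_apply] at hQ
    simpa [sympl_sum_left, sympl_smul_left, mul_comm] using hQ
  have hc := Fintype.linearIndependent_iff.1 hu c hcomb
  exact LinearMap.ext fun x => by simp [hφ_apply, hc]

lemma card_sympl_solutions {ι : Type*} [Fintype ι] {u : ι → V n}
    (hu : LinearIndependent (ZMod 2) u) (v : ι → ZMod 2) :
    Nat.card {Q : V n // ∀ i, sympl (u i) Q = v i} = 2 ^ (2 * n - Fintype.card ι) := by
  set F := LinearMap.pi fun i => symplForm n (u i)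
  have hF := surjective_pi_symplForm hu
  have hker : finrank (ZMod 2) (LinearMap.ker F) = 2 * n - Fintype.card ι := by
    have := F.finrank_range_add_finrank_ker
    rw [LinearMap.range_eq_top.2 hF, finrank_top, finrank_fintype_fun_eq_card, finrank_V] at this
    omega
  calc Nat.card {Q : V n // ∀ i, sympl (u i) Q = v i}
      = Nat.card (F.toAddMonoidHom ⁻¹' {v}) :=
        Nat.card_congr (Equiv.subtypeEquivRight fun Q => by simp [F, funext_iff, symplForm_apply])
    _ = Nat.card (LinearMap.ker F) := Nat.card_congr (AddMonoidHom.fiberEquivKerOfSurjective hF v)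
    _ = 2 ^ (2 * n - Fintype.card ι) := by
        rw [natCard_eq_pow_finrank (K := ZMod 2), hker, Nat.card_zmod]

def IsAnticommuting {ι : Type*} (u : ι → V n) : Prop :=
  Pairwise fun i j => sympl (u i) (u j) = 1

namespace IsAnticommuting

variable {ι : Type*} {u : ι → V n}

lemma injective (hu : IsAnticommuting u) : Injective u := by
  intro i j hij
  by_contra hne
  have h : sympl (u i) (u j) = 1 := hu hne
  rw [hij, sympl_self] at h
  exact zero_ne_one h

lemma comp (hu : IsAnticommuting u) {κ : Type*} {f : κ → ι} (hf : Injective f) :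
    IsAnticommuting (u ∘ f) :=
  hu.comp_of_injective hf

variable [Fintype ι]

lemma sympl_sum_smul (hu : IsAnticommuting u) (c : ι → ZMod 2) (i : ι) :
    sympl (u i) (∑ k, c k • u k) = ∑ k, c k - c i := by
  classical
  rw [sympl_sum_right, ← add_sum_erase _ _ (mem_univ i), ← add_sum_erase _ c (mem_univ i),
    sympl_smul_right, sympl_self, mul_zero, zero_add, add_sub_cancel_left]
  exact sum_congr rfl fun k hk => by rw [sympl_smul_right, hu (ne_of_mem_erase hk).symm, mul_one]

lemma sympl_sum_eq_one (hu : IsAnticommuting u) (he : Even (Fintype.card ι)) (i : ι) :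
    sympl (u i) (∑ k, u k) = 1 := by
  simpa [he.natCast_zmod_two] using hu.sympl_sum_smul 1 i

lemma eq_sum_of_sum_smul_eq_zero (hu : IsAnticommuting u) {c : ι → ZMod 2}
    (hc : ∑ k, c k • u k = 0) (i : ι) : c i = ∑ k, c k := by
  have h := hu.sympl_sum_smul c i
  rw [hc, sympl_zero_right, eq_comm, sub_eq_zero] at h
  exact h.symm

lemma linearIndependent_of_sum_ne_zero (hu : IsAnticommuting u) (hsum : ∑ k, u k ≠ 0) :
    LinearIndependent (ZMod 2) u := by
  refine Fintype.linearIndependent_iff.2 fun c hc i => ?_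
  by_contra hi
  have hci : c i = 1 := (by decide : ∀ a : ZMod 2, a ≠ 0 → a = 1) _ hi
  have hone : ∀ k, c k = 1 := fun k => by
    rw [hu.eq_sum_of_sum_smul_eq_zero hc k, ← hu.eq_sum_of_sum_smul_eq_zero hc i, hci]
  simp only [hone, one_smul] at hc
  exact hsum hc

lemma linearIndependent_of_sympl_eq_one (hu : IsAnticommuting u) {W : V n}
    (hW : ∀ k, sympl W (u k) = 1) : LinearIndependent (ZMod 2) u := by
  refine Fintype.linearIndependent_iff.2 fun c hc i => ?_
  have hσ : ∑ k, c k = 0 := by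
    have h := congrArg (sympl W) hc
    simpa only [sympl_sum_right, sympl_smul_right, hW, mul_one, sympl_zero_right] using h
  rw [hu.eq_sum_of_sum_smul_eq_zero hc i, hσ]

end IsAnticommuting

lemma isAnticommuting_snoc_iff {j : ℕ} {u : Fin j → V n} {Q : V n} :
    IsAnticommuting (Fin.snoc u Q : Fin (j + 1) → V n) ↔
      IsAnticommuting u ∧ ∀ i, sympl (u i) Q = 1 := by
  constructor
  · intro h
    refine ⟨by simpa using h.comp (Fin.castSucc_injective j), fun i => ?_⟩
    simpa using h (Fin.castSucc_lt_last i).ne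
  · rintro ⟨hu, hQ⟩ i i' hne
    induction i using Fin.lastCases <;> induction i' using Fin.lastCases
    · exact absurd rfl hne
    · simpa [sympl_comm] using hQ _
    · simpa using hQ _
    · simpa using hu (Fin.castSucc_injective j |>.ne_iff.1 hne)

lemma IsAnticommuting.sympl_eq_one_and_mem_span_iff {ι : Type*} [Fintype ι] {u : ι → V n}
    (hu : IsAnticommuting u) (Q : V n) :
    ((∀ i, sympl (u i) Q = 1) ∧ Q ∈ Submodule.span (ZMod 2) (Set.range u)) ↔
      Even (Fintype.card ι) ∧ Q = ∑ i, u i := by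
  constructor
  · rintro ⟨hQ, hspan⟩
    obtain ⟨c, rfl⟩ := (Submodule.mem_span_range_iff_exists_fun _).1 hspan
    have hc : ∀ i, c i = ∑ k, c k - 1 := fun i => by
      linear_combination -(hu.sympl_sum_smul c i).symm.trans (hQ i)
    have hσ : ∑ k, c k = Fintype.card ι * (∑ k, c k - 1) := by
      conv_lhs => rw [sum_congr rfl fun i _ => hc i]
      simp [mul_sub]
    rcases Nat.even_or_odd (Fintype.card ι) with he | ho
    · rw [he.natCast_zmod_two, zero_mul] at hσ
      refine ⟨he, sum_congr rfl fun i _ => ?_⟩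
      rw [hc i, hσ, show (0 - 1 : ZMod 2) = 1 from rfl, one_smul]
    · rw [ho.natCast_zmod_two, one_mul, eq_sub_iff_add_eq, add_eq_left] at hσ
      exact absurd hσ one_ne_zero
  · rintro ⟨he, rfl⟩
    exact ⟨hu.sympl_sum_eq_one he,
      Submodule.sum_mem _ fun i _ => Submodule.subset_span ⟨i, rfl⟩⟩

def extensionCount (n k : ℕ) : ℕ := 2 ^ (2 * n - k) - if Even k then 1 else 0

lemma card_extensions {ι : Type*} [Fintype ι] {u : ι → V n} (hu : IsAnticommuting u)
    (hli : LinearIndependent (ZMod 2) u) :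
    Nat.card {Q : V n // (∀ i, sympl (u i) Q = 1) ∧
      Q ∉ Submodule.span (ZMod 2) (Set.range u)} = extensionCount n (Fintype.card ι) := by
  have hspan : Nat.card {Q : V n // (∀ i, sympl (u i) Q = 1) ∧
      Q ∈ Submodule.span (ZMod 2) (Set.range u)} = if Even (Fintype.card ι) then 1 else 0 := by
    rw [Nat.card_congr (Equiv.subtypeEquivRight hu.sympl_eq_one_and_mem_span_iff)]
    split_ifs with he <;> simp [he]
  have hsplit := Nat.card_and_add_card_and_not (fun Q : V n => ∀ i, sympl (u i) Q = 1)
    (· ∈ Submodule.span (ZMod 2) (Set.range u))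
  rw [hspan, card_sympl_solutions hli] at hsplit
  unfold extensionCount
  omega

lemma isAnticommuting_linearIndependent_snoc_iff {j : ℕ} {u : Fin j → V n} {Q : V n} :
    (IsAnticommuting (Fin.snoc u Q : Fin (j + 1) → V n) ∧
        LinearIndependent (ZMod 2) (Fin.snoc u Q : Fin (j + 1) → V n)) ↔
      (IsAnticommuting u ∧ LinearIndependent (ZMod 2) u) ∧
        (∀ i, sympl (u i) Q = 1) ∧ Q ∉ Submodule.span (ZMod 2) (Set.range u) := by
  rw [isAnticommuting_snoc_iff, linearIndependent_finSnoc]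
  tauto

abbrev IndepAC (n j : ℕ) :=
  {u : Fin j → V n // IsAnticommuting u ∧ LinearIndependent (ZMod 2) u}

def IndepAC.init {j : ℕ} (t : IndepAC n (j + 1)) : IndepAC n j :=
  ⟨Fin.init t.1, (isAnticommuting_linearIndependent_snoc_iff.1
    ((Fin.snoc_init_self t.1).symm ▸ t.2)).1⟩

def IndepAC.initFiberEquiv {j : ℕ} (u : IndepAC n j) :
    {t : IndepAC n (j + 1) // t.init = u} ≃
      {Q : V n // (∀ i, sympl (u.1 i) Q = 1) ∧
        Q ∉ Submodule.span (ZMod 2) (Set.range u.1)} where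
  toFun t := ⟨t.1.1 (Fin.last j), by
    obtain ⟨⟨t, ht⟩, rfl⟩ := t
    exact (isAnticommuting_linearIndependent_snoc_iff.1 ((Fin.snoc_init_self t).symm ▸ ht)).2⟩
  invFun Q :=
    ⟨⟨Fin.snoc u.1 Q.1, isAnticommuting_linearIndependent_snoc_iff.2 ⟨u.2, Q.2⟩⟩,
      Subtype.ext (by simp [IndepAC.init])⟩
  left_inv := by
    rintro ⟨⟨t, ht⟩, rfl⟩
    exact Subtype.ext (Subtype.ext (Fin.snoc_init_self t))
  right_inv Q := Subtype.ext (Fin.snoc_last (α := fun _ => V n) _ _)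

lemma card_indepAC (j : ℕ) : Nat.card (IndepAC n j) = ∏ k ∈ range j, extensionCount n k := by
  induction j with
  | zero =>
    rw [prod_range_zero, Nat.card_eq_one_iff_unique]
    exact ⟨⟨fun _ _ => Subtype.ext (funext finZeroElim)⟩,
      ⟨⟨finZeroElim, fun i => i.elim0, linearIndependent_empty_type⟩⟩⟩
  | succ j ih =>
    rw [prod_range_succ, ← ih]
    refine Nat.card_eq_mul_of_card_fiber IndepAC.init fun u => ?_
    rw [Nat.card_congr u.initFiberEquiv, card_extensions u.2.1 u.2.2, Fintype.card_fin]

lemma AC.isAnticommuting {G : Finset (V n)} (hG : AC G) : IsAnticommuting ((↑) : G → V n) :=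
  fun x y hxy => hG x x.2 y y.2 (Subtype.coe_injective.ne hxy)

lemma AC.sympl_sum {H S : Finset (V n)} (hH : AC H) (hS : S ⊆ H) {P : V n} (hP : P ∈ H) :
    sympl P (∑ Q ∈ S, Q) = #(S.erase P) := by
  rw [sympl_sum_right, ← sum_erase _ (sympl_self P),
    sum_congr rfl fun Q hQ => hH P hP Q (hS (mem_of_mem_erase hQ)) (ne_of_mem_erase hQ).symm]
  simp

lemma maxAC_of_sum_eq_zero {G : Finset (V n)} (hG : AC G) (hne : G.Nonempty)
    (hsum : ∑ Q ∈ G, Q = 0) : MaxAC G := by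
  obtain ⟨P, hP⟩ := hne
  refine ⟨hG, fun H hGH hH => subset_antisymm (fun x hx => ?_) hGH⟩
  by_contra hxG
  have hPG := hH.sympl_sum hGH (hGH hP)
  have hxG' := hH.sympl_sum hGH hx
  rw [hsum, sympl_zero_right] at hPG hxG'
  rw [erase_eq_of_notMem hxG, ← card_erase_add_one hP, Nat.cast_add, ← hPG] at hxG'
  exact zero_ne_one (hxG'.trans (zero_add 1))

namespace MaxAC

variable {G : Finset (V n)}

lemma nonempty (h : MaxAC G) : G.Nonempty := by
  rw [nonempty_iff_ne_empty]
  rintro rfl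
  have hAC : AC ({0} : Finset (V n)) := by simp [AC]
  exact singleton_ne_empty 0 (h.2 {0} (empty_subset _) hAC)

lemma sum_eq_zero (h : MaxAC G) : ∑ Q ∈ G, Q = 0 := by
  by_contra hsum
  have hli := h.1.isAnticommuting.linearIndependent_of_sum_ne_zero
    (by rwa [sum_coe_sort G fun Q => Q])
  obtain ⟨Q, hQ⟩ := surjective_pi_symplForm hli fun _ => 1
  have hQG : ∀ P ∈ G, sympl P Q = 1 := fun P hP => congrFun hQ ⟨P, hP⟩
  have hQ_notMem : Q ∉ G := fun hQ => by simpa [sympl_self] using hQG Q hQ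
  have hAC : AC (insert Q G) := by
    intro P hP P' hP' hne
    rw [mem_insert] at hP hP'
    rcases hP with rfl | hP <;> rcases hP' with rfl | hP'
    · exact absurd rfl hne
    · rw [sympl_comm]; exact hQG _ hP'
    · exact hQG _ hP
    · exact h.1 _ hP _ hP' hne
  exact hQ_notMem (insert_eq_self.1 (h.2 _ (subset_insert Q G) hAC))

lemma odd_card (h : MaxAC G) : Odd #G := by
  obtain ⟨P, hP⟩ := h.nonempty
  have hP' := h.1.sympl_sum Subset.rfl hP
  rw [h.sum_eq_zero, sympl_zero_right, eq_comm, ZMod.natCast_eq_zero_iff_even] at hP'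
  rw [← card_erase_add_one hP]
  exact hP'.add_one

end MaxAC

lemma maxAC_iff {G : Finset (V n)} : MaxAC G ↔ AC G ∧ G.Nonempty ∧ ∑ Q ∈ G, Q = 0 :=
  ⟨fun h => ⟨h.1, h.nonempty, h.sum_eq_zero⟩,
    fun ⟨hG, hne, hsum⟩ => maxAC_of_sum_eq_zero hG hne hsum⟩

lemma isAnticommuting_and_sum_eq_zero_iff {m : ℕ} (hm : 0 < m) (t : Fin m → V n) :
    IsAnticommuting t ∧ ∑ i, t i = 0 ↔ Injective t ∧ MaxAC (univ.image t) := by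
  have hAC (ht : Injective t) : AC (univ.image t) ↔ IsAnticommuting t := by
    refine ⟨fun h i j hij => h _ (mem_image_of_mem t (mem_univ i)) _
      (mem_image_of_mem t (mem_univ j)) (ht.ne hij), fun h P hP Q hQ hne => ?_⟩
    obtain ⟨i, -, rfl⟩ := mem_image.1 hP
    obtain ⟨j, -, rfl⟩ := mem_image.1 hQ
    exact h fun hij => hne (congrArg t hij)
  have hsum (ht : Injective t) : ∑ Q ∈ univ.image t, Q = ∑ i, t i :=
    sum_image fun i _ j _ hij => ht hij
  have hne : (univ.image t).Nonempty := univ_nonempty_iff.2 ⟨⟨0, hm⟩⟩ |>.image t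
  constructor
  · rintro ⟨hu, hzero⟩
    have ht := hu.injective
    exact ⟨ht, maxAC_iff.2 ⟨(hAC ht).2 hu, hne, hsum ht ▸ hzero⟩⟩
  · rintro ⟨ht, hmax⟩
    obtain ⟨hG, -, hzero⟩ := maxAC_iff.1 hmax
    exact ⟨(hAC ht).1 hG, hsum ht ▸ hzero⟩

def sumZeroEquiv {j : ℕ} (hj : Even j) :
    {t : Fin (j + 1) → V n // IsAnticommuting t ∧ ∑ i, t i = 0} ≃ IndepAC n j where
  toFun t :=
    have ht := isAnticommuting_snoc_iff.1 ((Fin.snoc_init_self t.1).symm ▸ t.2.1)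
    ⟨Fin.init t.1, ht.1, ht.1.linearIndependent_of_sympl_eq_one fun k => by
      rw [sympl_comm]; exact ht.2 k⟩
  invFun u := ⟨Fin.snoc u.1 (∑ i, u.1 i),
    isAnticommuting_snoc_iff.2 ⟨u.2.1, u.2.1.sympl_sum_eq_one (by rwa [Fintype.card_fin])⟩,
    by simp [Fin.sum_univ_castSucc, ZModModule.add_self]⟩
  left_inv := by
    rintro ⟨t, ht, hsum⟩
    refine Subtype.ext ?_
    have hlast : ∑ i, Fin.init t i = t (Fin.last j) := by
      rw [Fin.sum_univ_castSucc] at hsum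
      rw [← ZModModule.neg_eq_self (t (Fin.last j))]
      exact eq_neg_of_add_eq_zero_left hsum
    simp only [hlast, Fin.snoc_init_self]
  right_inv u := Subtype.ext (Fin.init_snoc (α := fun _ => V n) _ _)

lemma card_maxAC_mul_factorial {j : ℕ} (hj : Even j) :
    Nat.card {G : Finset (V n) // MaxAC G ∧ #G = j + 1} * (j + 1).factorial =
      ∏ k ∈ range j, extensionCount n k := by
  rw [← card_injective_tuples, ← card_indepAC, ← Nat.card_congr (sumZeroEquiv hj)]
  exact Nat.card_congr (Equiv.subtypeEquivRight fun t =>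
    (isAnticommuting_and_sum_eq_zero_iff j.succ_pos t).symm)

lemma card_maxAC_eq_zero_of_even {m : ℕ} (hm : Even m) :
    Nat.card {G : Finset (V n) // MaxAC G ∧ #G = m} = 0 :=
  Nat.card_eq_zero.2 (Or.inl ⟨fun G => (Nat.not_even_iff_odd.2 (G.2.2 ▸ G.2.1.odd_card)) hm⟩)

lemma extensionCount_cast {k : ℕ} (hk : k ≤ 2 * n) : (extensionCount n k : ℚ) = s n k := by
  have hpow : (2 : ℚ) ^ (2 * n - k) = 4 ^ n / 2 ^ k := by
    rw [eq_div_iff (by positivity), ← pow_add, Nat.sub_add_cancel hk, pow_mul]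
    norm_num
  rcases Nat.even_or_odd k with he | ho
  · simp [extensionCount, s, he, Nat.not_odd_iff_even.2 he, hpow, Nat.cast_sub Nat.one_le_two_pow]
  · simp [extensionCount, s, ho, Nat.not_even_iff_odd.2 ho, hpow]

lemma extensionCount_two_mul : extensionCount n (2 * n) = 0 := by
  simp [extensionCount]

end

theorem stmt_19 {n : ℕ} (m : ℕ) :
    (Odd m → m ≤ 2 * n + 1 →
      (Nat.card {G : Finset (V n) // MaxAC G ∧ G.card = m} : ℚ)
        = (∏ k ∈ Finset.range (m - 1), s n k) / (m.factorial : ℚ)) ∧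
    (Even m ∨ 2 * n + 1 < m →
      (Nat.card {G : Finset (V n) // MaxAC G ∧ G.card = m} : ℚ) = 0) := by
  refine ⟨?_, ?_⟩
  · rintro ⟨k, rfl⟩ hle
    have h := card_maxAC_mul_factorial (n := n) (even_two_mul k)
    rw [Nat.add_sub_cancel, eq_div_iff (by positivity)]
    calc _ = ∏ i ∈ range (2 * k), (extensionCount n i : ℚ) := by exact_mod_cast h
      _ = _ := prod_congr rfl fun i hi => extensionCount_cast (by rw [mem_range] at hi; omega)
  · intro hm
    obtain he | ⟨k, rfl⟩ := Nat.even_or_odd m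
    · rw [card_maxAC_eq_zero_of_even he, Nat.cast_zero]
    have hlt := hm.resolve_left (Nat.not_even_iff_odd.2 (odd_two_mul_add_one k))
    have h := card_maxAC_mul_factorial (n := n) (even_two_mul k)
    rw [prod_eq_zero (mem_range.2 (by omega)) extensionCount_two_mul] at h
    rw [(mul_eq_zero.1 h).resolve_right (Nat.factorial_ne_zero _), Nat.cast_zero]
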